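/- Let x : Ω → ℝ^m and y : Ω → ℝ^n be random vectors on a probability space (Ω, μ) whose coordinate functions are measurable and square-integrable. Let E_{yy}⁺ be a Moore–Penrose pseudoinverse of E_{yy} with (E_{yy}⁺)ᵀ = E_{yy}⁺, and let Λ = E_{xy} E_{yy}⁺ E_{yx} ∈ ℝ^{m×m} (a symmetric matrix) with eigenvalues λ_1,…,λ_m (counted with multiplicity). Then for every r ≤ m the rank-constrained minimum mean square error is attained and equals: there exists F̂ ∈ ℝ^{m×n} with rank F̂ ≤ r such that for all F ∈ ℝ^{m×n} with rank F ≤ r, ∫_Ω ‖x(ω) − F̂ y(ω)‖₂² dμ ≤ ∫_Ω ‖x(ω) − F y(ω)‖₂² dμ, and ∫_Ω ‖x(ω) − F̂ y(ω)‖₂² dμ = tr(E_{xx}) − max_{s ⊆ {1,…,m}, |s| = r} Σ_{i∈s} λ_i (the maximum being the sum of the r largest eigenvalues of Λ). -/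

import Mathlib

open MeasureTheory Matrix

/-- Second-moment matrix `E_{uv}` of two random vectors. -/
noncomputable def secondMoment {Ω : Type*} [MeasurableSpace Ω] (μ : Measure Ω)
    {a b : ℕ} (u : Ω → Fin a → ℝ) (v : Ω → Fin b → ℝ) : Matrix (Fin a) (Fin b) ℝ :=
  Matrix.of fun i j => ∫ ω, u ω i * v ω j ∂μ

/-- Mean square error `∫ ‖x(ω) − F y(ω)‖₂² dμ`. -/
noncomputable def mse {Ω : Type*} [MeasurableSpace Ω] (μ : Measure Ω)
    {m n : ℕ} (x : Ω → Fin m → ℝ) (y : Ω → Fin n → ℝ)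
    (F : Matrix (Fin m) (Fin n) ℝ) : ℝ :=
  ∫ ω, ∑ i, (x ω i - F.mulVec (y ω) i) ^ 2 ∂μ

/-- `B` is a Moore–Penrose pseudoinverse of `A`. -/
def IsMoorePenrose {a b : ℕ} (A : Matrix (Fin a) (Fin b) ℝ)
    (B : Matrix (Fin b) (Fin a) ℝ) : Prop :=
  A * B * A = A ∧ B * A * B = B ∧ (A * B)ᵀ = A * B ∧ (B * A)ᵀ = B * A


set_option linter.unusedSectionVars false
set_option maxHeartbeats 1000000

namespace MMSEAux
open ENNReal

lemma two_half : (1:ℝ≥0∞)/1 = 1/2 + 1/2 := by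
  rw [ENNReal.div_add_div_same, one_div_one, one_add_one_eq_two,
    ENNReal.div_self two_ne_zero ENNReal.ofNat_ne_top]

section Prob
variable {Ω : Type*} [MeasurableSpace Ω] {μ : Measure Ω}

lemma int_mul {f g : Ω → ℝ} (hf : MemLp f 2 μ) (hg : MemLp g 2 μ) :
    Integrable (fun ω => f ω * g ω) μ :=
  memLp_one_iff_integrable.mp ((hg.smul hf (r := 1) :))

variable {m n : ℕ} {x : Ω → Fin m → ℝ} {y : Ω → Fin n → ℝ}
  (hxL : ∀ i, MemLp (fun ω => x ω i) 2 μ)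
  (hyL : ∀ j, MemLp (fun ω => y ω j) 2 μ)


lemma sq_comb (v : Fin n → ℝ) (ω : Ω) :
    (∑ j, v j * y ω j)^2 = ∑ j, ∑ k, v j * v k * (y ω j * y ω k) := by
  rw [sq, Finset.sum_mul_sum]
  exact Finset.sum_congr rfl fun j _ => Finset.sum_congr rfl fun k _ => by ring

include hyL in
lemma int_sq_comb (v : Fin n → ℝ) :
    Integrable (fun ω => (∑ j, v j * y ω j)^2) μ := by
  have : Integrable (fun ω => ∑ j, ∑ k, v j * v k * (y ω j * y ω k)) μ := by
    apply integrable_finset_sum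
    intro j _
    apply integrable_finset_sum
    intro k _
    exact (int_mul (hyL j) (hyL k)).const_mul _
  simpa only [sq_comb] using this

include hyL in
lemma quad_form (v : Fin n → ℝ) :
    v ⬝ᵥ ((secondMoment μ y y) *ᵥ v) = ∫ ω, (∑ j, v j * y ω j)^2 ∂μ := by
  have : ∫ ω, (∑ j, v j * y ω j)^2 ∂μ
      = ∑ j, ∑ k, v j * v k * ∫ ω, y ω j * y ω k ∂μ := by
    simp only [sq_comb]
    rw [integral_finset_sum _ (fun j _ => integrable_finset_sum _
      (fun k _ => (int_mul (hyL j) (hyL k)).const_mul _))]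
    exact Finset.sum_congr rfl fun j _ => by
      rw [integral_finset_sum _ (fun k _ => (int_mul (hyL j) (hyL k)).const_mul _)]
      exact Finset.sum_congr rfl fun k _ => integral_const_mul _ _
  rw [this]
  simp only [dotProduct, mulVec, secondMoment, Matrix.of_apply, Finset.mul_sum]
  exact Finset.sum_congr rfl fun j _ => Finset.sum_congr rfl fun k _ => by ring

include hxL hyL in
lemma ker_lemma {v : Fin n → ℝ} (hv : (secondMoment μ y y) *ᵥ v = 0) :
    (secondMoment μ x y) *ᵥ v = 0 := by
  have h0 : ∫ ω, (∑ j, v j * y ω j)^2 ∂μ = 0 := by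
    rw [← quad_form hyL v, hv, dotProduct_zero]
  have hz : (fun ω => ∑ j, v j * y ω j) =ᵐ[μ] 0 := by
    have := (integral_eq_zero_iff_of_nonneg (fun ω => sq_nonneg _)
      (int_sq_comb hyL v)).mp h0
    filter_upwards [this] with ω h
    exact pow_eq_zero_iff (two_ne_zero) |>.mp h
  funext i
  have hswap : ((secondMoment μ x y) *ᵥ v) i = ∫ ω, x ω i * (∑ j, v j * y ω j) ∂μ := by
    have : ∀ ω, x ω i * (∑ j, v j * y ω j) = ∑ j, v j * (x ω i * y ω j) := by
      intro ω; rw [Finset.mul_sum]; exact Finset.sum_congr rfl fun j _ => by ring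
    simp only [this]
    rw [integral_finset_sum _ (fun j _ => (int_mul (hxL i) (hyL j)).const_mul _)]
    simp only [mulVec, dotProduct, secondMoment, Matrix.of_apply]
    exact Finset.sum_congr rfl fun j _ => by rw [integral_const_mul]; ring
  have : ∫ ω, x ω i * (∑ j, v j * y ω j) ∂μ = 0 := by
    rw [integral_congr_ae (g := fun _ => (0:ℝ))]
    · exact integral_zero _ _
    · filter_upwards [hz] with ω h
      simp only [h, Pi.zero_apply] at *
      simp [h]
  simp [hswap, this]

include hxL hyL in
lemma mse_expand (F : Matrix (Fin m) (Fin n) ℝ) :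
    mse μ x y F = (∑ i, ∫ ω, (x ω i)^2 ∂μ)
      - 2 * (∑ i, ∑ j, F i j * ∫ ω, x ω i * y ω j ∂μ)
      + (∑ i, ∑ j, ∑ k, F i j * F i k * ∫ ω, y ω j * y ω k ∂μ) := by
  have hpt : ∀ ω, ∑ i, (x ω i - F.mulVec (y ω) i)^2
      = (∑ i, (x ω i)^2) - 2*(∑ i, ∑ j, F i j * (x ω i * y ω j))
        + (∑ i, ∑ j, ∑ k, F i j * F i k * (y ω j * y ω k)) := by
    intro ω
    have hone : ∀ i, (x ω i - F.mulVec (y ω) i)^2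
        = (x ω i)^2 - 2*(∑ j, F i j * (x ω i * y ω j))
          + (∑ j, ∑ k, F i j * F i k * (y ω j * y ω k)) := by
      intro i
      have hb : F.mulVec (y ω) i = ∑ j, F i j * y ω j := rfl
      have h1 : x ω i * (∑ j, F i j * y ω j) = ∑ j, F i j * (x ω i * y ω j) := by
        rw [Finset.mul_sum]; exact Finset.sum_congr rfl fun j _ => by ring
      have h2 : (∑ j, F i j * y ω j)^2 = ∑ j, ∑ k, F i j * F i k * (y ω j * y ω k) := by
        rw [sq, Finset.sum_mul_sum]
        exact Finset.sum_congr rfl fun j _ => Finset.sum_congr rfl fun k _ => by ring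
      rw [hb, sub_sq, h2, ← h1]; ring
    rw [Finset.sum_congr rfl fun i _ => hone i, Finset.sum_add_distrib,
      Finset.sum_sub_distrib, ← Finset.mul_sum]
  have hA : Integrable (fun ω => ∑ i, (x ω i)^2) μ :=
    integrable_finset_sum _ fun i _ => (hxL i).integrable_sq
  have hB : Integrable (fun ω => ∑ i, ∑ j, F i j * (x ω i * y ω j)) μ :=
    integrable_finset_sum _ fun i _ => integrable_finset_sum _ fun j _ =>
      (int_mul (hxL i) (hyL j)).const_mul _
  have hC : Integrable (fun ω => ∑ i, ∑ j, ∑ k, F i j * F i k * (y ω j * y ω k)) μ :=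
    integrable_finset_sum _ fun i _ => integrable_finset_sum _ fun j _ =>
      integrable_finset_sum _ fun k _ => (int_mul (hyL j) (hyL k)).const_mul _
  have hB2 : Integrable (fun ω => 2 * ∑ i, ∑ j, F i j * (x ω i * y ω j)) μ :=
    hB.const_mul 2
  have hAB : Integrable (fun ω => (∑ i, (x ω i)^2)
      - 2 * ∑ i, ∑ j, F i j * (x ω i * y ω j)) μ := hA.sub hB2
  unfold mse
  simp only [hpt]
  rw [integral_add hAB hC, integral_sub hA hB2]
  congr 1
  · congr 1
    · exact integral_finset_sum _ fun i _ => (hxL i).integrable_sq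
    · rw [integral_const_mul]
      congr 1
      rw [integral_finset_sum _ (f := fun i ω => ∑ j, F i j * (x ω i * y ω j))
        fun i _ => integrable_finset_sum _ fun j _ =>
        (int_mul (hxL i) (hyL j)).const_mul _]
      exact Finset.sum_congr rfl fun i _ => by
        rw [integral_finset_sum _ fun j _ => (int_mul (hxL i) (hyL j)).const_mul _]
        exact Finset.sum_congr rfl fun j _ => integral_const_mul _ _
  · rw [integral_finset_sum _ fun i _ => integrable_finset_sum _ fun j _ =>
      integrable_finset_sum _ fun k _ => (int_mul (hyL j) (hyL k)).const_mul _]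
    exact Finset.sum_congr rfl fun i _ => by
      rw [integral_finset_sum _ fun j _ => integrable_finset_sum _ fun k _ =>
        (int_mul (hyL j) (hyL k)).const_mul _]
      exact Finset.sum_congr rfl fun j _ => by
        rw [integral_finset_sum _ fun k _ => (int_mul (hyL j) (hyL k)).const_mul _]
        exact Finset.sum_congr rfl fun k _ => integral_const_mul _ _

include hxL hyL in
lemma mse_eq (F : Matrix (Fin m) (Fin n) ℝ) :
    mse μ x y F = (secondMoment μ x x).trace
      - 2 * (F * secondMoment μ y x).trace
      + (F * secondMoment μ y y * Fᵀ).trace := by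
  rw [mse_expand hxL hyL F]
  congr 1
  · congr 1
    · simp [Matrix.trace, Matrix.diag, secondMoment, sq]
    · congr 1
      simp only [Matrix.trace, Matrix.diag, Matrix.mul_apply, secondMoment, Matrix.of_apply]
      exact Finset.sum_congr rfl fun i _ => Finset.sum_congr rfl fun j _ => by
        rw [integral_congr_ae (g := fun ω => x ω i * y ω j)
          (Filter.Eventually.of_forall fun ω => mul_comm _ _)]
  · simp only [Matrix.trace, Matrix.diag, Matrix.mul_apply, secondMoment, Matrix.of_apply,
      Matrix.transpose_apply, Finset.sum_mul]
    rw [Finset.sum_congr rfl fun i (_ : i ∈ Finset.univ) => Finset.sum_comm]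
    exact Finset.sum_congr rfl fun i _ => Finset.sum_congr rfl fun j _ =>
      Finset.sum_congr rfl fun k _ => by ring

end Prob

section Mat

variable {m n : ℕ}

lemma mul_eq_zero_of_ker {Exy : Matrix (Fin m) (Fin n) ℝ} {Eyy : Matrix (Fin n) (Fin n) ℝ}
    (hker : ∀ v : Fin n → ℝ, Eyy *ᵥ v = 0 → Exy *ᵥ v = 0)
    {C : Matrix (Fin n) (Fin n) ℝ} (h : Eyy * C = 0) : Exy * C = 0 := by
  ext i j
  have hcol : Eyy *ᵥ (fun k => C k j) = 0 := by
    funext i'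
    have : (Eyy * C) i' j = 0 := by rw [h]; rfl
    simpa [Matrix.mul_apply, Matrix.mulVec, dotProduct] using this
  have := congrFun (hker _ hcol) i
  simpa [Matrix.mul_apply, Matrix.mulVec, dotProduct] using this

lemma trace_ABt {a b : ℕ} (A B : Matrix (Fin a) (Fin b) ℝ) :
    (A * Bᵀ).trace = (B * Aᵀ).trace := by
  rw [← Matrix.trace_transpose (A * Bᵀ), Matrix.transpose_mul, Matrix.transpose_transpose,
    Matrix.trace_mul_comm]

lemma trace_quad {F F₀ : Matrix (Fin m) (Fin n) ℝ} {Eyy : Matrix (Fin n) (Fin n) ℝ}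
    {Exy : Matrix (Fin m) (Fin n) ℝ} {Eyx : Matrix (Fin n) (Fin m) ℝ}
    (hF₀ : F₀ * Eyy = Exy) (hsym : Eyyᵀ = Eyy) (hyx : Eyx = Exyᵀ) :
    ((F - F₀) * Eyy * (F - F₀)ᵀ).trace
      = (F * Eyy * Fᵀ).trace - 2 * (F * Eyx).trace + (F₀ * Eyx).trace := by
  have t2 : (F₀ * Eyy * Fᵀ).trace = (F * Eyx).trace := by
    rw [hF₀, trace_ABt, hyx]
  have t1 : (F * Eyy * F₀ᵀ).trace = (F * Eyx).trace := by
    rw [trace_ABt (F * Eyy) F₀, Matrix.transpose_mul, hsym, ← Matrix.mul_assoc, t2]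
  have t3 : (F₀ * Eyy * F₀ᵀ).trace = (F₀ * Eyx).trace := by
    rw [hF₀, trace_ABt, hyx]
  simp only [Matrix.transpose_sub, Matrix.sub_mul, Matrix.mul_sub, Matrix.trace_sub]
  rw [t1, t2, t3]
  ring

lemma trace_mul_transpose_nonneg (A : Matrix (Fin m) (Fin n) ℝ) :
    0 ≤ (A * Aᵀ).trace := by
  simp only [Matrix.trace, Matrix.diag, Matrix.mul_apply, Matrix.transpose_apply]
  exact Finset.sum_nonneg fun i _ => Finset.sum_nonneg fun j _ => mul_self_nonneg _

lemma proj_conj {P : Matrix (Fin m) (Fin m) ℝ} (hPt : Pᵀ = P)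
    (N : Matrix (Fin m) (Fin n) ℝ) :
    (P * N) * (P * N)ᵀ = P * (N * Nᵀ) * P := by
  rw [Matrix.transpose_mul, hPt]
  simp [Matrix.mul_assoc]

lemma trace_PKP {P K : Matrix (Fin m) (Fin m) ℝ} (hPP : P * P = P) :
    (P * K * P).trace = (P * K).trace := by
  rw [Matrix.trace_mul_comm (P * K) P, ← Matrix.mul_assoc, hPP]

lemma pythagoras {P : Matrix (Fin m) (Fin m) ℝ} (hPt : Pᵀ = P) (hPP : P * P = P)
    (N : Matrix (Fin m) (Fin n) ℝ) :
    (N * Nᵀ).trace = ((P * N) * (P * N)ᵀ).trace + (((1 - P) * N) * ((1 - P) * N)ᵀ).trace := by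
  have hQt : (1 - P)ᵀ = 1 - P := by rw [Matrix.transpose_sub, Matrix.transpose_one, hPt]
  have hQQ : (1 - P) * (1 - P) = 1 - P := by
    rw [Matrix.mul_sub, Matrix.sub_mul, Matrix.sub_mul, hPP]
    simp
  rw [proj_conj hPt, proj_conj hQt, trace_PKP hPP, trace_PKP hQQ]
  rw [Matrix.sub_mul, Matrix.one_mul, Matrix.trace_sub]
  ring

variable {m : ℕ}

-- scalar Ky Fan
lemma kyfan_scalar {r : ℕ} (lam c : Fin m → ℝ) (hlam : ∀ i, 0 ≤ lam i)
    (hc0 : ∀ i, 0 ≤ c i) (hc1 : ∀ i, c i ≤ 1) (hsum : ∑ i, c i ≤ (r : ℝ))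
    (t : Finset (Fin m)) (htc : t.card = r)
    (hmax : ∀ s : Finset (Fin m), s.card = r → ∑ i ∈ s, lam i ≤ ∑ i ∈ t, lam i) :
    ∑ i, lam i * c i ≤ ∑ i ∈ t, lam i := by
  rcases Nat.eq_zero_or_pos r with hr0 | hrpos
  · subst hr0
    have ht : t = ∅ := Finset.card_eq_zero.mp htc
    have hcz : ∀ i ∈ Finset.univ, c i = 0 := by
      have := (Finset.sum_eq_zero_iff_of_nonneg (fun i _ => hc0 i)).mp
        (le_antisymm (by simpa using hsum) (Finset.sum_nonneg fun i _ => hc0 i))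
      exact this
    have hz : ∑ i, lam i * c i = 0 :=
      Finset.sum_eq_zero fun i hi => by rw [hcz i hi, mul_zero]
    rw [ht, Finset.sum_empty, hz]
  · have htne : t.Nonempty := Finset.card_pos.mp (htc ▸ hrpos)
    obtain ⟨i₀, hi₀, hmin⟩ := Finset.exists_min_image t lam htne
    set θ := lam i₀ with hθ
    have hθ0 : 0 ≤ θ := hlam i₀
    have hout : ∀ j, j ∉ t → lam j ≤ θ := by
      intro j hj
      have hcard : (insert j (t.erase i₀)).card = r := by
        rw [Finset.card_insert_of_notMem (fun h => hj (Finset.mem_of_mem_erase h)),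
          Finset.card_erase_of_mem hi₀, htc]
        omega
      have := hmax _ hcard
      rw [Finset.sum_insert (fun h => hj (Finset.mem_of_mem_erase h))] at this
      have herase : ∑ i ∈ t.erase i₀, lam i = ∑ i ∈ t, lam i - θ := by
        rw [hθ, ← Finset.sum_erase_add t lam hi₀]; ring
      rw [herase] at this
      linarith
    -- main chain
    have hsplit : ∑ i, lam i * c i = ∑ i ∈ t, lam i * c i + ∑ i ∈ tᶜ, lam i * c i :=
      (Finset.sum_add_sum_compl t _).symm
    have hcomp : ∑ i ∈ tᶜ, lam i * c i ≤ θ * ∑ i ∈ tᶜ, c i := by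
      rw [Finset.mul_sum]
      apply Finset.sum_le_sum
      intro j hj
      have := hout j (by simpa using hj)
      exact mul_le_mul_of_nonneg_right this (hc0 j) |>.trans_eq rfl
    have hcsplit : ∑ i ∈ tᶜ, c i = ∑ i, c i - ∑ i ∈ t, c i := by
      rw [← Finset.sum_add_sum_compl t c]; ring
    have h2 : θ * ∑ i ∈ tᶜ, c i ≤ θ * ((r : ℝ) - ∑ i ∈ t, c i) := by
      apply mul_le_mul_of_nonneg_left _ hθ0
      rw [hcsplit]; linarith
    have h3 : θ * ((r : ℝ) - ∑ i ∈ t, c i) = ∑ i ∈ t, θ * (1 - c i) := by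
      rw [show (r:ℝ) = ∑ _i ∈ t, (1:ℝ) by simp [htc], ← Finset.sum_sub_distrib,
        Finset.mul_sum]
    have h4 : ∑ i ∈ t, θ * (1 - c i) ≤ ∑ i ∈ t, lam i * (1 - c i) := by
      apply Finset.sum_le_sum
      intro i hi
      exact mul_le_mul_of_nonneg_right (hmin i hi) (by linarith [hc1 i])
    have h5 : ∑ i ∈ t, lam i * c i + ∑ i ∈ t, lam i * (1 - c i) = ∑ i ∈ t, lam i := by
      rw [← Finset.sum_add_distrib]
      exact Finset.sum_congr rfl fun i _ => by ring
    linarith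
variable {m : ℕ} {U : Matrix (Fin m) (Fin m) ℝ}
  (hU1 : Uᵀ * U = 1) (hU2 : U * Uᵀ = 1)

include hU1 in
lemma conj_mul_conj (a b : Fin m → ℝ) :
    (U * diagonal a * Uᵀ) * (U * diagonal b * Uᵀ)
      = U * diagonal (fun i => a i * b i) * Uᵀ := by
  have : diagonal a * (Uᵀ * U) * diagonal b = diagonal (fun i => a i * b i) := by
    rw [hU1, Matrix.mul_one, Matrix.diagonal_mul_diagonal]
  calc (U * diagonal a * Uᵀ) * (U * diagonal b * Uᵀ)
      = U * (diagonal a * (Uᵀ * U) * diagonal b) * Uᵀ := by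
        simp only [Matrix.mul_assoc]
    _ = U * diagonal (fun i => a i * b i) * Uᵀ := by rw [this]

lemma conj_transpose_eq (a : Fin m → ℝ) :
    (U * diagonal a * Uᵀ)ᵀ = U * diagonal a * Uᵀ := by
  rw [Matrix.transpose_mul, Matrix.transpose_mul, Matrix.transpose_transpose,
    Matrix.diagonal_transpose, Matrix.mul_assoc]

include hU1 in
lemma trace_conj (a : Fin m → ℝ) :
    (U * diagonal a * Uᵀ).trace = ∑ i, a i := by
  rw [Matrix.trace_mul_comm, ← Matrix.mul_assoc, hU1, Matrix.one_mul,
    Matrix.trace_diagonal]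

lemma trace_mul_diag (Q : Matrix (Fin m) (Fin m) ℝ) (d : Fin m → ℝ) :
    (Q * diagonal d).trace = ∑ i, Q i i * d i := by
  simp [Matrix.trace, Matrix.diag, Matrix.mul_apply, Matrix.diagonal, Finset.sum_ite_eq]

lemma idem_diag_nonneg {Q : Matrix (Fin m) (Fin m) ℝ} (hQt : Qᵀ = Q) (hQQ : Q * Q = Q)
    (i : Fin m) : 0 ≤ Q i i := by
  have : Q i i = ∑ j, Q i j * Q i j := by
    conv_lhs => rw [← hQQ]
    rw [Matrix.mul_apply]
    exact Finset.sum_congr rfl fun j _ => by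
      conv_lhs => rw [show Q j i = Qᵀ i j from rfl, hQt]
  rw [this]
  exact Finset.sum_nonneg fun j _ => mul_self_nonneg _

lemma idem_diag_le_one {Q : Matrix (Fin m) (Fin m) ℝ} (hQt : Qᵀ = Q) (hQQ : Q * Q = Q)
    (i : Fin m) : Q i i ≤ 1 := by
  have hRt : (1 - Q)ᵀ = 1 - Q := by rw [Matrix.transpose_sub, Matrix.transpose_one, hQt]
  have hRR : (1 - Q) * (1 - Q) = 1 - Q := by
    rw [Matrix.mul_sub, Matrix.sub_mul, Matrix.sub_mul, hQQ]; simp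
  have := idem_diag_nonneg hRt hRR i
  simp only [Matrix.sub_apply, Matrix.one_apply_eq] at this
  linarith

lemma exists_projection {m n : ℕ} (G : Matrix (Fin m) (Fin n) ℝ) :
    ∃ P : Matrix (Fin m) (Fin m) ℝ, Pᵀ = P ∧ P * P = P ∧ P * G = G ∧
      P.trace = (G.rank : ℝ) := by
  classical
  set V : Submodule ℝ (EuclideanSpace ℝ (Fin m)) :=
    LinearMap.range (Matrix.toEuclideanLin G) with hV
  have hVrank : Module.finrank ℝ V = G.rank := by
    rw [Matrix.rank_eq_finrank_range_toLin G (PiLp.basisFun 2 ℝ (Fin m))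
      (PiLp.basisFun 2 ℝ (Fin n))]
    rfl
  set d := Module.finrank ℝ V with hd
  let b := stdOrthonormalBasis ℝ V
  let w : Fin d → EuclideanSpace ℝ (Fin m) := fun k => (b k : EuclideanSpace ℝ (Fin m))
  have hortho : ∀ k l, ∑ j, w k j * w l j = if k = l then 1 else 0 := by
    intro k l
    have h1 := orthonormal_iff_ite.mp b.orthonormal k l
    have h2 : (inner ℝ (b k) (b l) : ℝ) = ∑ j, w k j * w l j := by
      rw [Submodule.coe_inner]
      simp [PiLp.inner_apply, RCLike.inner_apply, w]
      exact Finset.sum_congr rfl fun _ _ => mul_comm _ _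
    rw [← h2, h1]
  set P : Matrix (Fin m) (Fin m) ℝ := Matrix.of (fun i j => ∑ k, w k i * w k j) with hP
  have hPt : Pᵀ = P := by
    ext i j
    simp only [Matrix.transpose_apply, hP, Matrix.of_apply]
    exact Finset.sum_congr rfl fun k _ => mul_comm _ _
  have hPP : P * P = P := by
    ext i j
    rw [Matrix.mul_apply]
    simp only [hP, Matrix.of_apply]
    calc ∑ l, (∑ k, w k i * w k l) * (∑ k', w k' l * w k' j)
        = ∑ l, ∑ k, ∑ k', (w k i * w k' j) * (w k l * w k' l) := by
          refine Finset.sum_congr rfl fun l _ => ?_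
          rw [Finset.sum_mul_sum]
          exact Finset.sum_congr rfl fun k _ => Finset.sum_congr rfl fun k' _ => by ring
      _ = ∑ k, ∑ k', (w k i * w k' j) * ∑ l, (w k l * w k' l) := by
          rw [Finset.sum_comm]
          exact Finset.sum_congr rfl fun k _ => by
            rw [Finset.sum_comm]
            exact Finset.sum_congr rfl fun k' _ => (Finset.mul_sum _ _ _).symm
      _ = ∑ k, w k i * w k j := by
          simp only [hortho, mul_ite, mul_one, mul_zero]
          exact Finset.sum_congr rfl fun k _ => by rw [Finset.sum_ite_eq]; simp
  have hfix : ∀ v : EuclideanSpace ℝ (Fin m), v ∈ V → ∀ i, (∑ j, P i j * v j) = v i := by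
    intro v hv i
    set vV : V := ⟨v, hv⟩ with hvV
    have hrep := b.sum_repr vV
    have hcoe : ∑ k, b.repr vV k • w k = v := by
      have := congrArg (Submodule.subtype V) hrep
      simpa [map_sum, w] using this
    have hreprk : ∀ k, b.repr vV k = ∑ j, w k j * v j := by
      intro k
      rw [b.repr_apply_apply]
      rw [show (inner ℝ (b k) vV : ℝ) = inner ℝ (w k) v from Submodule.coe_inner _ _ _]
      simp [PiLp.inner_apply, RCLike.inner_apply]
      exact Finset.sum_congr rfl fun _ _ => mul_comm _ _
    simp only [hP, Matrix.of_apply]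
    calc ∑ j, (∑ k, w k i * w k j) * v j
        = ∑ k, (∑ j, w k j * v j) * w k i := by
          simp_rw [Finset.sum_mul]
          rw [Finset.sum_comm]
          exact Finset.sum_congr rfl fun k _ =>
            Finset.sum_congr rfl fun j _ => by ring
      _ = ∑ k, (b.repr vV k •  w k) i := by
          refine Finset.sum_congr rfl fun k _ => ?_
          rw [← hreprk k]
          rfl
      _ = (∑ k, b.repr vV k • w k) i := by simp
      _ = v i := by rw [hcoe]
  have hPG : P * G = G := by
    ext i j0
    have hcol : ((WithLp.equiv 2 (Fin m → ℝ)).symm (fun i => G i j0)) ∈ V := by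
      refine ⟨(WithLp.equiv 2 (Fin n → ℝ)).symm (Pi.single j0 1), ?_⟩
      rw [WithLp.equiv_symm_apply, WithLp.equiv_symm_apply, Matrix.toLpLin_toLp]
      congr 1
      funext i
      simp [Matrix.mulVec_single]
    have := hfix _ hcol i
    rw [Matrix.mul_apply]
    simpa using this
  have hPtr : P.trace = (G.rank : ℝ) := by
    have : P.trace = ∑ k : Fin d, ∑ i, w k i * w k i := by
      simp only [Matrix.trace, Matrix.diag, hP, Matrix.of_apply]
      rw [Finset.sum_comm]
    rw [this]
    simp only [hortho]
    simp [hVrank]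
  exact ⟨P, hPt, hPP, hPG, hPtr⟩

open scoped MatrixOrder in
lemma psd_sqrt {n : ℕ} {A : Matrix (Fin n) (Fin n) ℝ} (hA : A.PosSemidef) :
    ∃ S : Matrix (Fin n) (Fin n) ℝ, S * S = A ∧ Sᵀ = S :=
  ⟨CFC.sqrt A, CFC.sqrt_mul_sqrt_self A hA.nonneg, by
    have := (CFC.sqrt_nonneg A).posSemidef.1
    simpa [Matrix.IsHermitian, Matrix.conjTranspose_eq_transpose_of_trivial] using this⟩

end Mat
end MMSEAux

open MMSEAux

theorem rank_constrained_mmse {Ω : Type*} [MeasurableSpace Ω] (μ : Measure Ω)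
    [IsProbabilityMeasure μ] {m n : ℕ}
    (x : Ω → Fin m → ℝ) (y : Ω → Fin n → ℝ)
    (hxm : ∀ i, Measurable fun ω => x ω i) (hxL : ∀ i, MemLp (fun ω => x ω i) 2 μ)
    (hym : ∀ j, Measurable fun ω => y ω j) (hyL : ∀ j, MemLp (fun ω => y ω j) 2 μ)
    (Eyyp : Matrix (Fin n) (Fin n) ℝ)
    (hEyyp : IsMoorePenrose (secondMoment μ y y) Eyyp) (hEyypSymm : Eyypᵀ = Eyyp)
    (hΛ : (secondMoment μ x y * Eyyp * secondMoment μ y x).IsHermitian)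
    (r : ℕ) (hr : r ≤ m) :
    ∃ Fhat : Matrix (Fin m) (Fin n) ℝ, Fhat.rank ≤ r ∧
      (∀ F : Matrix (Fin m) (Fin n) ℝ, F.rank ≤ r → mse μ x y Fhat ≤ mse μ x y F) ∧
      mse μ x y Fhat =
        (secondMoment μ x x).trace -
          (Finset.univ.powersetCard r).sup'
            (Finset.powersetCard_nonempty.mpr (by simpa using hr))
            (fun t => ∑ i ∈ t, hΛ.eigenvalues i) := by
  classical
  set Exx := secondMoment μ x x with hExx
  set Exy := secondMoment μ x y with hExy
  set Eyx := secondMoment μ y x with hEyx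
  set Eyy := secondMoment μ y y with hEyy
  -- basic symmetry facts
  have hyx : Eyx = Exyᵀ := by
    ext j i
    simp only [hEyx, hExy, secondMoment, Matrix.of_apply, Matrix.transpose_apply]
    exact integral_congr_ae (Filter.Eventually.of_forall fun ω => mul_comm _ _)
  have hEyySym : Eyyᵀ = Eyy := by
    ext j k
    simp only [hEyy, secondMoment, Matrix.of_apply, Matrix.transpose_apply]
    exact integral_congr_ae (Filter.Eventually.of_forall fun ω => mul_comm _ _)
  -- PSD of Eyy
  have hEyyPSD : Eyy.PosSemidef := by
    refine Matrix.PosSemidef.of_dotProduct_mulVec_nonneg ?_ ?_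
    · rw [Matrix.IsHermitian, Matrix.conjTranspose_eq_transpose_of_trivial, hEyySym]
    · intro v
      rw [star_trivial]
      rw [quad_form hyL v]
      exact integral_nonneg fun ω => sq_nonneg _
  -- key range identity
  have hkey : Exy * Eyyp * Eyy = Exy := by
    have hC : Eyy * (Eyyp * Eyy - 1) = 0 := by
      rw [Matrix.mul_sub, ← Matrix.mul_assoc, hEyyp.1, Matrix.mul_one, sub_self]
    have h0 := mul_eq_zero_of_ker (fun v hv => ker_lemma hxL hyL hv) hC
    rw [Matrix.mul_sub, Matrix.mul_one, sub_eq_zero, ← Matrix.mul_assoc] at h0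
    exact h0
  set F₀ : Matrix (Fin m) (Fin n) ℝ := Exy * Eyyp with hF₀
  set Λ : Matrix (Fin m) (Fin m) ℝ := Exy * Eyyp * Eyx with hΛdef
  have hF₀Eyy : F₀ * Eyy = Exy := hkey
  have hF₀t : F₀ᵀ = Eyyp * Eyx := by
    rw [hF₀, Matrix.transpose_mul, hEyypSymm, hyx]
  have hF₀EyyF₀ : F₀ * Eyy * F₀ᵀ = Λ := by
    rw [hF₀Eyy, hF₀t, hΛdef, Matrix.mul_assoc]
  -- square root of Eyy
  obtain ⟨S, hSS, hSt⟩ := psd_sqrt hEyyPSD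
  set M : Matrix (Fin m) (Fin n) ℝ := F₀ * S with hM
  have hMMt : M * Mᵀ = Λ := by
    rw [hM, Matrix.transpose_mul, hSt, show F₀ * S * (S * F₀ᵀ) = F₀ * (S * S) * F₀ᵀ by
      simp only [Matrix.mul_assoc], hSS, hF₀EyyF₀]
  -- PSD of Λ and eigen decomposition
  have hΛPSD : Λ.PosSemidef := by
    rw [← hMMt, show Mᵀ = Mᴴ from (Matrix.conjTranspose_eq_transpose_of_trivial M).symm]
    exact Matrix.posSemidef_self_mul_conjTranspose M
  set lam : Fin m → ℝ := hΛ.eigenvalues with hlam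
  have hlam0 : ∀ i, 0 ≤ lam i := fun i => hΛPSD.eigenvalues_nonneg i
  set U : Matrix (Fin m) (Fin m) ℝ := (hΛ.eigenvectorUnitary : Matrix (Fin m) (Fin m) ℝ) with hUdef
  have hU1 : Uᵀ * U = 1 := by
    have := (Matrix.mem_unitaryGroup_iff').mp (hΛ.eigenvectorUnitary).2
    simpa [Matrix.star_eq_conjTranspose, Matrix.conjTranspose_eq_transpose_of_trivial] using this
  have hU2 : U * Uᵀ = 1 := by
    have := (Matrix.mem_unitaryGroup_iff).mp (hΛ.eigenvectorUnitary).2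
    simpa [Matrix.star_eq_conjTranspose, Matrix.conjTranspose_eq_transpose_of_trivial] using this
  have hspec : Λ = U * Matrix.diagonal lam * Uᵀ := by
    have := hΛ.spectral_theorem
    simpa [Matrix.star_eq_conjTranspose, Matrix.conjTranspose_eq_transpose_of_trivial] using this
  have htrΛ : Λ.trace = ∑ i, lam i := by rw [hspec, trace_conj hU1]
  -- the maximizing subset
  obtain ⟨t, htmem, htval⟩ := Finset.exists_mem_eq_sup'
    (Finset.powersetCard_nonempty.mpr (by simpa using hr) :
      (Finset.univ.powersetCard r (α := Fin m)).Nonempty)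
    (fun t => ∑ i ∈ t, lam i)
  have htc : t.card = r := (Finset.mem_powersetCard.mp htmem).2
  have hmax : ∀ s : Finset (Fin m), s.card = r → ∑ i ∈ s, lam i ≤ ∑ i ∈ t, lam i := by
    intro s hs
    rw [← htval]
    exact Finset.le_sup' (fun u => ∑ i ∈ u, lam i)
      (Finset.mem_powersetCard.mpr ⟨Finset.subset_univ s, hs⟩)
  -- the candidate
  set χ : Fin m → ℝ := fun i => if i ∈ t then 1 else 0 with hχ
  set Pt : Matrix (Fin m) (Fin m) ℝ := U * Matrix.diagonal χ * Uᵀ with hPtdef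
  set Fhat : Matrix (Fin m) (Fin n) ℝ := Pt * F₀ with hFhat
  -- rank bound
  have hrank : Fhat.rank ≤ r := by
    calc Fhat.rank ≤ Pt.rank := Matrix.rank_mul_le_left _ _
      _ ≤ (U * Matrix.diagonal χ).rank := Matrix.rank_mul_le_left _ _
      _ ≤ (Matrix.diagonal χ).rank := Matrix.rank_mul_le_right _ _
      _ = Fintype.card {i // χ i ≠ 0} := Matrix.rank_diagonal χ
      _ = t.card := by
          rw [Fintype.card_subtype]
          congr 1
          ext i
          by_cases h : i ∈ t <;> simp [hχ, h]
      _ = r := htc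
  -- mse identity
  have hmse : ∀ F : Matrix (Fin m) (Fin n) ℝ,
      mse μ x y F = Exx.trace - Λ.trace + ((F - F₀) * Eyy * (F - F₀)ᵀ).trace := by
    intro F
    have h1 := mse_eq hxL hyL F
    have h2 := trace_quad (F := F) hF₀Eyy hEyySym hyx
    have h3 : (F₀ * Eyx).trace = Λ.trace := by rw [hΛdef, hF₀, Matrix.mul_assoc]
    rw [h1, h2, h3]
    ring
  -- mse of Fhat
  have hmseFhat : mse μ x y Fhat = Exx.trace - ∑ i ∈ t, lam i := by
    rw [hmse Fhat]
    have hdiff : Fhat - F₀ = (Pt - 1) * F₀ := by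
      rw [Matrix.sub_mul, Matrix.one_mul, hFhat]
    have hψ : Pt - 1 = U * Matrix.diagonal (fun i => χ i - 1) * Uᵀ := by
      have : Matrix.diagonal (fun i => χ i - 1)
          = Matrix.diagonal χ - (1 : Matrix (Fin m) (Fin m) ℝ) := by
        rw [← Matrix.diagonal_one, Matrix.diagonal_sub]
      rw [this, Matrix.mul_sub, Matrix.sub_mul, Matrix.mul_one, hU2, hPtdef]
    have hquad : ((Fhat - F₀) * Eyy * (Fhat - F₀)ᵀ).trace = Λ.trace - ∑ i ∈ t, lam i := by
      have e1 : (Fhat - F₀) * Eyy * (Fhat - F₀)ᵀ = (Pt - 1) * Λ * (Pt - 1)ᵀ := by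
        rw [hdiff, Matrix.transpose_mul, show (Pt - 1) * F₀ * Eyy * (F₀ᵀ * (Pt - 1)ᵀ)
            = (Pt - 1) * (F₀ * Eyy * F₀ᵀ) * (Pt - 1)ᵀ by simp only [Matrix.mul_assoc],
          hF₀EyyF₀]
      rw [e1, hψ, conj_transpose_eq, hspec, conj_mul_conj hU1, conj_mul_conj hU1,
        trace_conj hU1]
      have : ∀ i, (fun i => χ i - 1) i * lam i * (fun i => χ i - 1) i
          = lam i - (if i ∈ t then lam i else 0) := by
        intro i
        by_cases h : i ∈ t <;> simp [hχ, h]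
      calc ∑ i, (fun i => χ i - 1) i * lam i * (fun i => χ i - 1) i
          = ∑ i, (lam i - if i ∈ t then lam i else 0) :=
            Finset.sum_congr rfl fun i _ => this i
        _ = ∑ i, lam i - ∑ i ∈ t, lam i := by
            rw [Finset.sum_sub_distrib]
            congr 1
            rw [Finset.sum_ite_mem, Finset.univ_inter]
        _ = (U * Matrix.diagonal lam * Uᵀ).trace - ∑ i ∈ t, lam i := by
            rw [trace_conj hU1]
    rw [hquad]
    ring
  refine ⟨Fhat, hrank, ?_, by rw [hmseFhat]; exact congrArg (fun z => Exx.trace - z) htval.symm⟩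
  -- minimality
  intro F hFr
  rw [hmse F, hmseFhat]
  have hquad_ge : Λ.trace - ∑ i ∈ t, lam i ≤ ((F - F₀) * Eyy * (F - F₀)ᵀ).trace := by
    set G : Matrix (Fin m) (Fin n) ℝ := F * S with hG
    set N : Matrix (Fin m) (Fin n) ℝ := (F - F₀) * S with hN
    have hNNt : N * Nᵀ = (F - F₀) * Eyy * (F - F₀)ᵀ := by
      rw [hN, Matrix.transpose_mul, hSt, show (F - F₀) * S * (S * (F - F₀)ᵀ)
          = (F - F₀) * (S * S) * (F - F₀)ᵀ by simp only [Matrix.mul_assoc], hSS]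
    obtain ⟨P, hPt, hPP, hPG, hPtr⟩ := exists_projection G
    have hGrank : (G.rank : ℝ) ≤ (r : ℝ) := by
      exact_mod_cast (Matrix.rank_mul_le_left F S).trans hFr
    have hNGM : N = G - M := by rw [hN, hG, hM, Matrix.sub_mul]
    have h1PN : (1 - P) * N = -((1 - P) * M) := by
      rw [hNGM, Matrix.mul_sub, Matrix.sub_mul, Matrix.sub_mul, hPG]
      simp
    have hpyth := pythagoras hPt hPP N
    have hterm : (((1 - P) * N) * ((1 - P) * N)ᵀ).trace
        = ((1 - P) * Λ).trace := by
      rw [h1PN, Matrix.transpose_neg, Matrix.neg_mul, Matrix.mul_neg, neg_neg]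
      have hQt : (1 - P)ᵀ = 1 - P := by
        rw [Matrix.transpose_sub, Matrix.transpose_one, hPt]
      have hQQ : (1 - P) * (1 - P) = 1 - P := by
        rw [Matrix.mul_sub, Matrix.sub_mul, Matrix.sub_mul, hPP]; simp
      rw [proj_conj hQt, hMMt, trace_PKP hQQ]
    have htrQΛ : ((1 - P) * Λ).trace = Λ.trace - (P * Λ).trace := by
      rw [Matrix.sub_mul, Matrix.one_mul, Matrix.trace_sub]
    -- Ky Fan bound
    have hKy : (P * Λ).trace ≤ ∑ i ∈ t, lam i := by
      set Q : Matrix (Fin m) (Fin m) ℝ := Uᵀ * P * U with hQdef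
      have hQt : Qᵀ = Q := by
        rw [hQdef, Matrix.transpose_mul, Matrix.transpose_mul, Matrix.transpose_transpose,
          hPt, Matrix.mul_assoc]
      have hQQ : Q * Q = Q := by
        rw [hQdef, show Uᵀ * P * U * (Uᵀ * P * U) = Uᵀ * (P * (U * Uᵀ) * P) * U by
          simp only [Matrix.mul_assoc], hU2, Matrix.mul_one, hPP]
      have htrQ : ∑ i, Q i i = P.trace := by
        have : Q.trace = P.trace := by
          rw [hQdef, Matrix.trace_mul_comm, show U * (Uᵀ * P) = U * Uᵀ * P by
            simp only [Matrix.mul_assoc], hU2, Matrix.one_mul]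
        simpa [Matrix.trace, Matrix.diag] using this
      have htrPΛ : (P * Λ).trace = ∑ i, Q i i * lam i := by
        rw [hspec, show P * (U * Matrix.diagonal lam * Uᵀ)
            = (P * U * Matrix.diagonal lam) * Uᵀ by simp only [Matrix.mul_assoc],
          Matrix.trace_mul_comm, show Uᵀ * (P * U * Matrix.diagonal lam)
            = (Uᵀ * P * U) * Matrix.diagonal lam by simp only [Matrix.mul_assoc],
          ← hQdef, trace_mul_diag]
      rw [htrPΛ]
      have := kyfan_scalar lam (fun i => Q i i) hlam0
        (fun i => idem_diag_nonneg hQt hQQ i) (fun i => idem_diag_le_one hQt hQQ i)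
        (by rw [htrQ, hPtr]; exact hGrank) t htc hmax
      calc ∑ i, Q i i * lam i = ∑ i, lam i * (fun i => Q i i) i :=
            Finset.sum_congr rfl fun i _ => mul_comm _ _
        _ ≤ ∑ i ∈ t, lam i := this
    have hposterm := trace_mul_transpose_nonneg (P * N)
    rw [← hNNt]
    rw [hterm, htrQΛ] at hpyth
    linarith
  linarith
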